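/- arXiv:2412.14911 — 2 statements merged into one kernel-verified Lean document; each statement's English description precedes it below -/
import Mathlib

section
/- In every K-algebra, the operation J₂ is idempotent: J₂(J₂x) = J₂x for every element x. -/
/-- The operations of a Bochvar-type algebra ⟨A, ∨, ¬, J₂, 0, 1⟩. -/
class KOps (α : Type*) where
  sup : α → α → α
  neg : α → α
  J : α → α
  zero : α
  one : α

namespace KOps

variable {α : Type*} [KOps α]

/-- The meet, defined à la De Morgan: x ∧ y := ¬(¬x ∨ ¬y). -/
def meet (x y : α) : α := neg (sup (neg x) (neg y))

end KOps

open KOps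

/-- A K-algebra: an algebra satisfying the identities K1–K12 axiomatising
the variety generated by Bochvar algebras. (K5 holds by definition of `meet`.) -/
class KAlgebra (α : Type*) [KOps α] : Prop where
  K1 : ∀ x : α, sup x x = x
  K2 : ∀ x y : α, sup x y = sup y x
  K3 : ∀ x y z : α, sup (sup x y) z = sup x (sup y z)
  K4 : ∀ x : α, neg (neg x) = x
  K5 : ∀ x y : α, meet x y = neg (sup (neg x) (neg y))
  K6 : ∀ x y : α, meet x (sup (neg x) y) = meet x y
  K7 : ∀ x : α, sup zero x = x
  K8 : (one : α) = neg zero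
  K9 : ∀ x : α, sup (J x) (neg (J x)) = one
  K10 : ∀ x y : α, sup x (J y) = sup x (J (sup x y))
  K11 : ∀ x : α, meet x (J x) = x
  K12 : ∀ x : α, J (meet x (neg x)) = zero

/-!
Put `a := J₂x` and `b := J₂a`. From `y ∨ J₂y = y` we get `a ∨ b = a`. Since `a` is complemented
(`a ∨ ¬a = 1`, axiom K9), K10 gives `¬a ∨ b = ¬a ∨ J₂1 = 1`. Then K6 yields `¬b = ¬b ∧ ¬a`,
i.e. `b = b ∨ a = a`.
-/

namespace KAlgebra

variable {α : Type*} [KOps α] [KAlgebra α]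

lemma neg_meet (x y : α) : neg (meet x y) = sup (neg x) (neg y) := by
  rw [meet, K4]

lemma meet_comm (x y : α) : meet x y = meet y x := by
  rw [meet, meet, K2]

lemma neg_one : (neg one : α) = zero := by
  rw [K8, K4]

lemma meet_one (x : α) : meet x (one : α) = x := by
  rw [meet, neg_one, K2, K7, K4]

lemma one_meet (x : α) : meet (one : α) x = x := by
  rw [meet_comm, meet_one]

lemma J_one : (J one : α) = one := by
  simpa only [one_meet] using K11 (one : α)

lemma sup_meet_neg_self (x : α) : sup x (meet x (neg x)) = x := by
  have h := congrArg neg (K6 (neg x) (neg x))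
  have hneg : neg (sup x (neg x)) = meet x (neg x) := by
    rw [meet_comm, meet, K4]
  rwa [neg_meet, neg_meet, K4, K1, hneg] at h

lemma sup_J_self (x : α) : sup x (J x) = x := by
  have h := K10 x (meet x (neg x))
  rw [K12, sup_meet_neg_self, K2, K7] at h
  exact h.symm

lemma sup_one_of_sup_eq_one {y z : α} (h : sup y z = one) : sup z one = one := by
  rw [← h, ← K3, K2 z y, K3, K1]

lemma neg_sup_J_eq_one {a : α} (h : sup a (neg a) = one) : sup (neg a) (J a) = one := by
  rw [K10, K2 (neg a) a, h, J_one]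
  exact sup_one_of_sup_eq_one h

lemma eq_of_sup_eq_of_neg_sup_eq_one {a b : α} (hab : sup a b = a) (hb : sup (neg a) b = one) :
    b = a := by
  have h : meet (neg b) (neg a) = neg b := by
    rw [← K6, K4, K2, hb, meet_one]
  rw [← K4 b, ← h, neg_meet, K4, K4, K2, hab]

end KAlgebra

open KAlgebra in
/-- In every K-algebra, J₂ is idempotent. -/
theorem stmt3 {α : Type*} [KOps α] [KAlgebra α] (x : α) : J (J x) = J x :=
  eq_of_sup_eq_of_neg_sup_eq_one (sup_J_self (J x)) (neg_sup_J_eq_one (K9 x))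
end

section
/- In every K-algebra A and for every fixed element a, the relation Θ_a = {(b,c) : a∨b = a∨c and a∨¬b = a∨¬c} is compatible with J₂; that is, if a∨b = a∨c and a∨¬b = a∨¬c, then a∨J₂b = a∨J₂c and a∨¬J₂b = a∨¬J₂c. -/
open KOps

/-! Both `a ∨ J₂b` and `a ∨ ¬J₂b` depend on `b` only through `a ∨ b`: for the first this is K10,
for the second it is K10 transported along the negated form `x ∨ ¬(x ∨ y) = x ∨ ¬y` of K6. -/

namespace KAlgebra

variable {α : Type*} [KOps α] [KAlgebra α]

theorem neg_injective : Function.Injective (neg : α → α) :=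
  Function.LeftInverse.injective K4

theorem sup_neg_sup_self (x y : α) : sup x (neg (sup x y)) = sup x (neg y) := by
  apply neg_injective
  simpa only [meet, K4] using K6 (neg x) y

theorem sup_neg_J_sup_self (x y : α) : sup x (neg (J (sup x y))) = sup x (neg (J y)) := by
  rw [← sup_neg_sup_self x (J y), K10, sup_neg_sup_self]

theorem sup_J_congr {a b c : α} (h : sup a b = sup a c) : sup a (J b) = sup a (J c) := by
  rw [K10 a b, K10 a c, h]

theorem sup_neg_J_congr {a b c : α} (h : sup a b = sup a c) :
    sup a (neg (J b)) = sup a (neg (J c)) := by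
  rw [← sup_neg_J_sup_self a b, ← sup_neg_J_sup_self a c, h]

end KAlgebra

theorem stmt5_general {α : Type*} [KOps α] [KAlgebra α] (a b c : α)
    (h1 : sup a b = sup a c) :
    sup a (J b) = sup a (J c) ∧ sup a (neg (J b)) = sup a (neg (J c)) :=
  ⟨KAlgebra.sup_J_congr h1, KAlgebra.sup_neg_J_congr h1⟩

/-- The relation Θ_a is compatible with J₂. -/
theorem stmt5 {α : Type*} [KOps α] [KAlgebra α] (a b c : α)
    (h1 : sup a b = sup a c) (h2 : sup a (neg b) = sup a (neg c)) :
    sup a (J b) = sup a (J c) ∧ sup a (neg (J b)) = sup a (neg (J c)) :=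
  stmt5_general a b c h1
end
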